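/- arXiv:2104.12328 — 4 statements merged into one kernel-verified Lean document; each statement's English description precedes it below -/
import Mathlib

section
/- Assume that for each 0 ≤ t₁ ≤ t₂ the map (ξ₁,ξ₂) ↦ l(t₁,t₂,ξ₁,ξ₂,u) is continuous. Then u is weakly persistent at x₀ if and only if there exists T > 0 such that for every t ≥ T there exists R_t > 0 such that for every ξ₁ ∈ B̄(x(t−T),R_t): ξ₁ is a global minimizer of ξ₂ ↦ l(t−T,t,ξ₁,ξ₂,u) (i.e. l(t−T,t,ξ₁,ξ₁,u) = 0 ≤ l(t−T,t,ξ₁,ξ₂,u) for all ξ₂ ∈ ℝ^{n_x}) and it is the unique minimizer within B̄(x(t−T),R_t) (l(t−T,t,ξ₁,ξ₂,u) > 0 for all ξ₂ ∈ B̄(x(t−T),R_t) with ξ₂ ≠ ξ₁). In particular, in this case x(t−T) is a global minimizer and a strict local minimizer of ξ ↦ l(t−T,t,x(t−T),ξ,u). -/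
open MeasureTheory Metric Set Filter

/-- State space `ℝ^n` with the Euclidean norm. -/
abbrev Vec (n : ℕ) := EuclideanSpace ℝ (Fin n)

/-- Cumulative output error
`l(t₁,t₂,ξ₁,ξ₂,u) = ∫_{t₁}^{t₂} ‖h(φ(s;t₁,ξ₁,u),u(s)) − h(φ(s;t₁,ξ₂,u),u(s))‖² ds`. -/
noncomputable def cumError {nx nu ny : ℕ}
    (h : Vec nx → Vec nu → Vec ny) (φ : ℝ → ℝ → Vec nx → Vec nx)
    (u : ℝ → Vec nu) (t₁ t₂ : ℝ) (ξ₁ ξ₂ : Vec nx) : ℝ :=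
  ∫ s in t₁..t₂, ‖h (φ s t₁ ξ₁) (u s) - h (φ s t₁ ξ₂) (u s)‖ ^ 2

/-- A `𝒦`-function: continuous, strictly increasing on `[0,∞)`, vanishing at `0`. -/
def IsKFunction (κ : ℝ → ℝ) : Prop :=
  ContinuousOn κ (Set.Ici 0) ∧ StrictMonoOn κ (Set.Ici 0) ∧ κ 0 = 0

/-- Weakly persistent input trajectory at `x₀`. -/
def WeaklyPersistentAt {nx nu ny : ℕ}
    (h : Vec nx → Vec nu → Vec ny) (φ : ℝ → ℝ → Vec nx → Vec nx)
    (u : ℝ → Vec nu) (x₀ : Vec nx) : Prop :=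
  ∃ T > (0 : ℝ), ∀ t ≥ T, ∃ R > (0 : ℝ), ∃ κ : ℝ → ℝ, IsKFunction κ ∧
    ∀ ξ₁ ∈ Metric.closedBall (φ (t - T) 0 x₀) R,
      ∀ ξ₂ ∈ Metric.closedBall (φ (t - T) 0 x₀) R,
        κ ‖ξ₁ - ξ₂‖ ≤ cumError h φ u (t - T) t ξ₁ ξ₂

/-!
A lower bound `κ ‖ξ₁ - ξ₂‖ ≤ l(ξ₁, ξ₂)` with `κ` of class `𝒦` forces `l > 0` off the diagonal.
Conversely, if the continuous cost `l ≥ 0` is positive off the diagonal of the compact square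
`K × K`, `K = B̄(x(t - T), R)`, then `g(s) = min (s, inf {l(ξ₁, ξ₂) | ξ₁, ξ₂ ∈ K, ‖ξ₁ - ξ₂‖ ≥ s})`
is nondecreasing and positive for `s > 0`, the infimum being attained by compactness. Hence
`κ(r) = ∫₀ʳ g(s) e⁻ˢ ds` is a `𝒦`-function, and `κ ≤ g` because `g` is nondecreasing and
`∫₀^∞ e⁻ˢ ds = 1`.
-/

open Real

theorem IsKFunction.pos {κ : ℝ → ℝ} (hκ : IsKFunction κ) {r : ℝ} (hr : 0 < r) : 0 < κ r :=
  hκ.2.2 ▸ hκ.2.1 self_mem_Ici hr.le hr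

theorem exists_isKFunction_le_of_monotone {g : ℝ → ℝ} (hg : Monotone g)
    (hpos : ∀ r, 0 < r → 0 < g r) :
    ∃ κ : ℝ → ℝ, IsKFunction κ ∧ ∀ r, 0 < r → κ r ≤ g r := by
  have hint : ∀ a b : ℝ, IntervalIntegrable (fun s => g s * exp (-s)) volume a b :=
    fun a b => hg.intervalIntegrable.mul_continuousOn (by fun_prop)
  refine ⟨fun r => ∫ s in (0 : ℝ)..r, g s * exp (-s), ⟨?_, ?_, by simp⟩, ?_⟩
  · exact (intervalIntegral.continuous_primitive hint 0).continuousOn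
  · intro a ha b _ hab
    have hgap : 0 < ∫ s in a..b, g s * exp (-s) :=
      intervalIntegral.intervalIntegral_pos_of_pos_on (hint a b)
        (fun s hs => mul_pos (hpos s ((mem_Ici.1 ha).trans_lt hs.1)) (exp_pos _)) hab
    rw [← intervalIntegral.integral_interval_sub_left (hint 0 b) (hint 0 a)] at hgap
    linarith
  · intro r hr
    have hexp : ∫ s in (0 : ℝ)..r, exp (-s) = 1 - exp (-r) := by
      rw [intervalIntegral.integral_comp_neg (fun s => exp s)]
      simp [integral_exp]
    calc ∫ s in (0 : ℝ)..r, g s * exp (-s)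
        ≤ ∫ s in (0 : ℝ)..r, g r * exp (-s) :=
          intervalIntegral.integral_mono_on hr.le (hint 0 r)
            (by apply Continuous.intervalIntegrable; fun_prop)
            (fun s hs => mul_le_mul_of_nonneg_right (hg hs.2) (exp_pos _).le)
      _ = g r * (1 - exp (-r)) := by rw [intervalIntegral.integral_const_mul, hexp]
      _ ≤ g r := by nlinarith [hpos r hr, exp_pos (-r)]

section SeparationModulus

variable {X : Type*} [PseudoMetricSpace X] {L : X → X → ℝ} {K : Set X}

/-- The extra point `s` keeps the set nonempty: otherwise the infimum would be the junk value
`sInf ∅ = 0` as soon as `s` exceeds the diameter of `K`. -/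
noncomputable def separationModulus (L : X → X → ℝ) (K : Set X) (s : ℝ) : ℝ :=
  sInf (insert s ((fun p : X × X => L p.1 p.2) '' {p ∈ K ×ˢ K | s ≤ dist p.1 p.2}))

theorem bddBelow_separationModulus_set (hL0 : ∀ x ∈ K, ∀ y ∈ K, 0 ≤ L x y) (s : ℝ) :
    BddBelow (insert s ((fun p : X × X => L p.1 p.2) '' {p ∈ K ×ˢ K | s ≤ dist p.1 p.2})) := by
  refine ⟨min s 0, ?_⟩
  rintro _ (rfl | ⟨p, hp, rfl⟩)
  · exact min_le_left _ _
  · exact (min_le_right _ _).trans (hL0 _ hp.1.1 _ hp.1.2)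

theorem separationModulus_le (hL0 : ∀ x ∈ K, ∀ y ∈ K, 0 ≤ L x y) {x y : X} (hx : x ∈ K)
    (hy : y ∈ K) : separationModulus L K (dist x y) ≤ L x y :=
  csInf_le (bddBelow_separationModulus_set hL0 _)
    (mem_insert_of_mem _ ⟨(x, y), ⟨⟨hx, hy⟩, le_rfl⟩, rfl⟩)

theorem monotone_separationModulus (hL0 : ∀ x ∈ K, ∀ y ∈ K, 0 ≤ L x y) :
    Monotone (separationModulus L K) := by
  intro s t hst
  refine le_csInf (insert_nonempty _ _) ?_
  rintro _ (rfl | ⟨p, hp, rfl⟩)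
  · exact (csInf_le (bddBelow_separationModulus_set hL0 s) (mem_insert _ _)).trans hst
  · exact csInf_le (bddBelow_separationModulus_set hL0 s)
      (mem_insert_of_mem _ ⟨p, ⟨hp.1, hst.trans hp.2⟩, rfl⟩)

theorem separationModulus_pos (hK : IsCompact K)
    (hL : ContinuousOn (fun p : X × X => L p.1 p.2) (K ×ˢ K))
    (hpos : ∀ x ∈ K, ∀ y ∈ K, y ≠ x → 0 < L x y) {s : ℝ} (hs : 0 < s) :
    0 < separationModulus L K s := by
  set S := {p ∈ K ×ˢ K | s ≤ dist p.1 p.2}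
  have hS : IsCompact S := (hK.prod hK).inter_right (isClosed_le continuous_const continuous_dist)
  obtain ⟨m, hm, hmS⟩ : ∃ m > 0, ∀ p ∈ S, m ≤ L p.1 p.2 := by
    rcases S.eq_empty_or_nonempty with hempty | hne
    · exact ⟨1, one_pos, by simp [hempty]⟩
    obtain ⟨p, hp, hmin⟩ := hS.exists_isMinOn hne (hL.mono fun _ hp => hp.1)
    have hsep : p.2 ≠ p.1 := fun h => by
      have := hp.2
      rw [h, dist_self] at this
      linarith
    exact ⟨L p.1 p.2, hpos _ hp.1.1 _ hp.1.2 hsep, fun q hq => hmin hq⟩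
  refine (lt_min hs hm).trans_le (le_csInf (insert_nonempty _ _) ?_)
  rintro _ (rfl | ⟨p, hp, rfl⟩)
  · exact min_le_left _ _
  · exact (min_le_right _ _).trans (hmS p hp)

theorem exists_isKFunction_le_of_pos_offDiag (hK : IsCompact K)
    (hL : ContinuousOn (fun p : X × X => L p.1 p.2) (K ×ˢ K))
    (hL0 : ∀ x ∈ K, ∀ y ∈ K, 0 ≤ L x y) (hpos : ∀ x ∈ K, ∀ y ∈ K, y ≠ x → 0 < L x y) :
    ∃ κ : ℝ → ℝ, IsKFunction κ ∧ ∀ x ∈ K, ∀ y ∈ K, κ (dist x y) ≤ L x y := by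
  obtain ⟨κ, hκ, hκg⟩ := exists_isKFunction_le_of_monotone (monotone_separationModulus hL0)
    fun s hs => separationModulus_pos hK hL hpos hs
  refine ⟨κ, hκ, fun x hx y hy => ?_⟩
  rcases (dist_nonneg (x := x) (y := y)).eq_or_lt with hxy | hxy
  · rw [← hxy, hκ.2.2]
    exact hL0 x hx y hy
  · exact (hκg _ hxy).trans (separationModulus_le hL0 hx hy)

end SeparationModulus

section CumError

variable {nx nu ny : ℕ} (h : Vec nx → Vec nu → Vec ny) (φ : ℝ → ℝ → Vec nx → Vec nx)
  (u : ℝ → Vec nu)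

theorem cumError_nonneg {t₁ t₂ : ℝ} (ht : t₁ ≤ t₂) (ξ₁ ξ₂ : Vec nx) :
    0 ≤ cumError h φ u t₁ t₂ ξ₁ ξ₂ :=
  intervalIntegral.integral_nonneg ht fun _ _ => by positivity

theorem cumError_self (t₁ t₂ : ℝ) (ξ : Vec nx) : cumError h φ u t₁ t₂ ξ ξ = 0 := by
  simp [cumError]

theorem cumError_pos_of_isKFunction_le {t₁ t₂ : ℝ} {κ : ℝ → ℝ} (hκ : IsKFunction κ)
    {ξ₁ ξ₂ : Vec nx} (hne : ξ₂ ≠ ξ₁) (hle : κ ‖ξ₁ - ξ₂‖ ≤ cumError h φ u t₁ t₂ ξ₁ ξ₂) :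
    0 < cumError h φ u t₁ t₂ ξ₁ ξ₂ :=
  (hκ.pos (norm_pos_iff.2 (sub_ne_zero.2 hne.symm))).trans_le hle

end CumError

theorem stmt3_general {nx nu ny : ℕ}
    (h : Vec nx → Vec nu → Vec ny)
    (u : ℝ → Vec nu) (φ : ℝ → ℝ → Vec nx → Vec nx) (x₀ : Vec nx)
    (hcont : ∀ t₁ t₂ : ℝ, 0 ≤ t₁ → t₁ ≤ t₂ →
      Continuous (fun p : Vec nx × Vec nx => cumError h φ u t₁ t₂ p.1 p.2)) :
    (WeaklyPersistentAt h φ u x₀ ↔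
      ∃ T > (0 : ℝ), ∀ t ≥ T, ∃ R > (0 : ℝ),
        ∀ ξ₁ ∈ Metric.closedBall (φ (t - T) 0 x₀) R,
          (cumError h φ u (t - T) t ξ₁ ξ₁ = 0 ∧
            ∀ ξ₂ : Vec nx, 0 ≤ cumError h φ u (t - T) t ξ₁ ξ₂) ∧
          (∀ ξ₂ ∈ Metric.closedBall (φ (t - T) 0 x₀) R, ξ₂ ≠ ξ₁ →
            0 < cumError h φ u (t - T) t ξ₁ ξ₂)) ∧
    (WeaklyPersistentAt h φ u x₀ →
      ∃ T > (0 : ℝ), ∀ t ≥ T,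
        (cumError h φ u (t - T) t (φ (t - T) 0 x₀) (φ (t - T) 0 x₀) = 0 ∧
          ∀ ξ : Vec nx, 0 ≤ cumError h φ u (t - T) t (φ (t - T) 0 x₀) ξ) ∧
        ∃ ε > (0 : ℝ), ∀ ξ ∈ Metric.ball (φ (t - T) 0 x₀) ε, ξ ≠ φ (t - T) 0 x₀ →
          cumError h φ u (t - T) t (φ (t - T) 0 x₀) (φ (t - T) 0 x₀) <
            cumError h φ u (t - T) t (φ (t - T) 0 x₀) ξ) := by
  refine ⟨⟨?_, ?_⟩, ?_⟩
  · rintro ⟨T, hT, hWP⟩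
    refine ⟨T, hT, fun t ht => ?_⟩
    obtain ⟨R, hR, κ, hκ, hle⟩ := hWP t ht
    exact ⟨R, hR, fun ξ₁ hξ₁ =>
      ⟨⟨cumError_self h φ u _ _ ξ₁, cumError_nonneg h φ u (by linarith) ξ₁⟩,
      fun ξ₂ hξ₂ hne => cumError_pos_of_isKFunction_le h φ u hκ hne (hle ξ₁ hξ₁ ξ₂ hξ₂)⟩⟩
  · rintro ⟨T, hT, hmin⟩
    refine ⟨T, hT, fun t ht => ?_⟩
    obtain ⟨R, hR, hmin⟩ := hmin t ht
    obtain ⟨κ, hκ, hle⟩ := exists_isKFunction_le_of_pos_offDiag (isCompact_closedBall _ R)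
      (hcont _ _ (by linarith) (by linarith)).continuousOn
      (fun ξ₁ _ ξ₂ _ => cumError_nonneg h φ u (by linarith) ξ₁ ξ₂)
      (fun ξ₁ hξ₁ => (hmin ξ₁ hξ₁).2)
    exact ⟨R, hR, κ, hκ, fun ξ₁ hξ₁ ξ₂ hξ₂ => dist_eq_norm ξ₁ ξ₂ ▸ hle ξ₁ hξ₁ ξ₂ hξ₂⟩
  · rintro ⟨T, hT, hWP⟩
    refine ⟨T, hT, fun t ht => ?_⟩
    obtain ⟨R, hR, κ, hκ, hle⟩ := hWP t ht
    refine ⟨⟨cumError_self h φ u _ _ _, cumError_nonneg h φ u (by linarith) _⟩, R, hR,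
      fun ξ hξ hne => ?_⟩
    rw [cumError_self]
    exact cumError_pos_of_isKFunction_le h φ u hκ hne
      (hle _ (mem_closedBall_self hR.le) ξ (ball_subset_closedBall hξ))

/-- characterization of weakly persistent inputs via local/global
minimizers of the MHE cost, plus the "in particular" consequence for `x(t−T)`. -/
theorem stmt3 {nx nu ny : ℕ}
    (f : Vec nx → Vec nu → Vec nx) (h : Vec nx → Vec nu → Vec ny)
    (u : ℝ → Vec nu) (φ : ℝ → ℝ → Vec nx → Vec nx) (x₀ : Vec nx)
    (hf : ContDiff ℝ 2 (Function.uncurry f))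
    (hh : ContDiff ℝ 2 (Function.uncurry h))
    (hflow_init : ∀ s₁ : ℝ, 0 ≤ s₁ → ∀ ξ, φ s₁ s₁ ξ = ξ)
    (hflow_ode : ∀ s₁ s : ℝ, 0 ≤ s₁ → s₁ ≤ s → ∀ ξ,
      HasDerivAt (fun τ => φ τ s₁ ξ) (f (φ s s₁ ξ) (u s)) s)
    (hcont : ∀ t₁ t₂ : ℝ, 0 ≤ t₁ → t₁ ≤ t₂ →
      Continuous (fun p : Vec nx × Vec nx => cumError h φ u t₁ t₂ p.1 p.2)) :
    (WeaklyPersistentAt h φ u x₀ ↔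
      ∃ T > (0 : ℝ), ∀ t ≥ T, ∃ R > (0 : ℝ),
        ∀ ξ₁ ∈ Metric.closedBall (φ (t - T) 0 x₀) R,
          (cumError h φ u (t - T) t ξ₁ ξ₁ = 0 ∧
            ∀ ξ₂ : Vec nx, 0 ≤ cumError h φ u (t - T) t ξ₁ ξ₂) ∧
          (∀ ξ₂ ∈ Metric.closedBall (φ (t - T) 0 x₀) R, ξ₂ ≠ ξ₁ →
            0 < cumError h φ u (t - T) t ξ₁ ξ₂)) ∧
    (WeaklyPersistentAt h φ u x₀ →
      ∃ T > (0 : ℝ), ∀ t ≥ T,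
        (cumError h φ u (t - T) t (φ (t - T) 0 x₀) (φ (t - T) 0 x₀) = 0 ∧
          ∀ ξ : Vec nx, 0 ≤ cumError h φ u (t - T) t (φ (t - T) 0 x₀) ξ) ∧
        ∃ ε > (0 : ℝ), ∀ ξ ∈ Metric.ball (φ (t - T) 0 x₀) ε, ξ ≠ φ (t - T) 0 x₀ →
          cumError h φ u (t - T) t (φ (t - T) 0 x₀) (φ (t - T) 0 x₀) <
            cumError h φ u (t - T) t (φ (t - T) 0 x₀) ξ) :=
  stmt3_general h u φ x₀ hcont
end

section
/- Assume that for each T > 0 and t ≥ T the map (ξ₁,ξ₂) ↦ l(t−T,t,ξ₁,ξ₂,u) is twice continuously differentiable. Then the following are equivalent: (i) there exists T > 0 such that for all t ≥ T the Observability Grammian C(t,T,x(t−T),u) is positive definite; (ii) there exists T > 0 such that for every t ≥ T there exists R_t > 0 with d²_{ξ₂}l(t−T,t,ξ₁,ξ₂,u) positive definite for all (ξ₁,ξ₂) ∈ B̄(x(t−T),R_t)². -/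
/-!
The Hessian of `ξ ↦ l(t−T,t,ξ₁,ξ,u)` at `ξ₂` is the `(ξ₂,ξ₂)`-block of the full Hessian of
the `C²` map `(ξ₁,ξ₂) ↦ l(t−T,t,ξ₁,ξ₂,u)`, so it depends continuously on `(ξ₁,ξ₂)`. By
compactness of the unit sphere and homogeneity of quadratic forms, positive definiteness is an
open condition on a continuous family of quadratic forms on a finite-dimensional space; hence it
propagates from the centre `(x(t−T),x(t−T))` to a product of closed balls. The converse is the
special case `ξ₁ = ξ₂ = x(t−T)`.
-/

open MeasureTheory Metric Set Filter

/-- Second Fréchet derivative of `ξ ↦ l(t₁,t₂,ξ₁,ξ,u)` at `ξ₂`, as a bilinear form. -/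
noncomputable def d2l {nx nu ny : ℕ}
    (h : Vec nx → Vec nu → Vec ny) (φ : ℝ → ℝ → Vec nx → Vec nx)
    (u : ℝ → Vec nu) (t₁ t₂ : ℝ) (ξ₁ ξ₂ v w : Vec nx) : ℝ :=
  iteratedFDeriv ℝ 2 (fun ξ => cumError h φ u t₁ t₂ ξ₁ ξ) ξ₂ ![v, w]

/-- Observability Grammian as a bilinear form:
`C(t,T,x(t−T),u)(v,w) = ½ d²_{ξ₂}l(t−T,t,x(t−T),x(t−T),u)(v,w)`. -/
noncomputable def grammian {nx nu ny : ℕ}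
    (h : Vec nx → Vec nu → Vec ny) (φ : ℝ → ℝ → Vec nx → Vec nx)
    (u : ℝ → Vec nu) (x₀ : Vec nx) (t T : ℝ) (v w : Vec nx) : ℝ :=
  (1 / 2) * d2l h φ u (t - T) t (φ (t - T) 0 x₀) (φ (t - T) 0 x₀) v w

open Topology

theorem iteratedFDeriv_comp_prodMk_left {𝕜 E₁ E₂ F : Type*} [NontriviallyNormedField 𝕜]
    [NormedAddCommGroup E₁] [NormedSpace 𝕜 E₁] [NormedAddCommGroup E₂] [NormedSpace 𝕜 E₂]
    [NormedAddCommGroup F] [NormedSpace 𝕜 F] {n : ℕ} {Φ : E₁ × E₂ → F} (hΦ : ContDiff 𝕜 n Φ)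
    (ξ₁ : E₁) (ξ₂ : E₂) (m : Fin n → E₂) :
    iteratedFDeriv 𝕜 n (fun ξ => Φ (ξ₁, ξ)) ξ₂ m =
      iteratedFDeriv 𝕜 n Φ (ξ₁, ξ₂) (fun i => (0, m i)) := by
  have hshift : ContDiff 𝕜 n fun p : E₁ × E₂ => Φ ((ξ₁, 0) + p) :=
    hΦ.comp (contDiff_const.add contDiff_id)
  have hcomp := (ContinuousLinearMap.inr 𝕜 E₁ E₂).iteratedFDeriv_comp_right hshift ξ₂ le_rfl
  simp only [Function.comp_def, ContinuousLinearMap.inr_apply, Prod.mk_add_mk, add_zero,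
    zero_add] at hcomp
  rw [hcomp, iteratedFDeriv_comp_add_left]
  simp

section PositiveDefiniteness

variable {E : Type*} [NormedAddCommGroup E] [NormedSpace ℝ E] [ProperSpace E]

theorem eventually_forall_pos_of_continuous_of_homogeneous {X : Type*} [TopologicalSpace X]
    {Q : X → E → ℝ} (hQ : Continuous (Function.uncurry Q))
    (hhom : ∀ p (c : ℝ) v, Q p (c • v) = c ^ 2 * Q p v)
    {p₀ : X} (hpos : ∀ v ≠ 0, 0 < Q p₀ v) : ∀ᶠ p in 𝓝 p₀, ∀ v ≠ 0, 0 < Q p v := by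
  have hsphere : ∀ᶠ p in 𝓝 p₀, ∀ w ∈ sphere (0 : E) 1, 0 < Q p w :=
    (isCompact_sphere 0 1).eventually_forall_of_forall_eventually fun w hw =>
      hQ.continuousAt.eventually (lt_mem_nhds (hpos w (ne_zero_of_mem_unit_sphere ⟨w, hw⟩)))
  filter_upwards [hsphere] with p hp v hv
  have hv' : ‖v‖ ≠ 0 := norm_ne_zero_iff.2 hv
  have hunit : 0 < Q p (‖v‖⁻¹ • v) := hp _ (by simp [norm_smul, hv'])
  calc 0 < ‖v‖ ^ 2 * Q p (‖v‖⁻¹ • v) := by positivity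
    _ = Q p v := by rw [← hhom, smul_smul, mul_inv_cancel₀ hv', one_smul]

theorem eventually_partialHessian_pos {E' : Type*} [NormedAddCommGroup E'] [NormedSpace ℝ E']
    {Φ : E' × E → ℝ} (hΦ : ContDiff ℝ 2 Φ) {p₀ : E' × E}
    (hpos : ∀ v ≠ 0, 0 < iteratedFDeriv ℝ 2 (fun ξ => Φ (p₀.1, ξ)) p₀.2 ![v, v]) :
    ∀ᶠ p in 𝓝 p₀, ∀ v ≠ 0, 0 < iteratedFDeriv ℝ 2 (fun ξ => Φ (p.1, ξ)) p.2 ![v, v] := by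
  simp only [iteratedFDeriv_comp_prodMk_left hΦ] at hpos ⊢
  refine eventually_forall_pos_of_continuous_of_homogeneous ?_ (fun p c v => ?_) hpos
  · have hvec : Continuous fun v : E => fun i : Fin 2 => ((0 : E'), ![v, v] i) :=
      continuous_pi fun i => continuous_const.prodMk (by fin_cases i <;> exact continuous_id)
    exact ((hΦ.continuous_iteratedFDeriv le_rfl).comp continuous_fst).eval
      (hvec.comp continuous_snd)
  · have hsmul : (fun i => ((0 : E'), ![c • v, c • v] i)) =
        fun i => c • ((0 : E'), ![v, v] i) := by
      ext i <;> fin_cases i <;> simp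
    rw [hsmul, ContinuousMultilinearMap.map_smul_univ]
    simp [sq]

end PositiveDefiniteness

theorem stmt6_general {nx nu ny : ℕ}
    (h : Vec nx → Vec nu → Vec ny)
    (u : ℝ → Vec nu) (φ : ℝ → ℝ → Vec nx → Vec nx) (x₀ : Vec nx)
    (hC2 : ∀ T > (0 : ℝ), ∀ t ≥ T,
      ContDiff ℝ 2 (fun p : Vec nx × Vec nx => cumError h φ u (t - T) t p.1 p.2)) :
    (∃ T > (0 : ℝ), ∀ t ≥ T,
        ∀ v : Vec nx, v ≠ 0 → 0 < grammian h φ u x₀ t T v v) ↔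
      (∃ T > (0 : ℝ), ∀ t ≥ T, ∃ R > (0 : ℝ),
        ∀ ξ₁ ∈ Metric.closedBall (φ (t - T) 0 x₀) R,
          ∀ ξ₂ ∈ Metric.closedBall (φ (t - T) 0 x₀) R,
            ∀ v : Vec nx, v ≠ 0 → 0 < d2l h φ u (t - T) t ξ₁ ξ₂ v v) := by
  constructor
  · rintro ⟨T, hT, hgram⟩
    refine ⟨T, hT, fun t ht => ?_⟩
    set x := φ (t - T) 0 x₀
    have hcentre : ∀ v ≠ 0, 0 < d2l h φ u (t - T) t x x v v := fun v hv => by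
      have := hgram t ht v hv
      rw [grammian] at this
      linarith
    have hnear := eventually_partialHessian_pos (hC2 T hT t ht) (p₀ := (x, x)) hcentre
    obtain ⟨R, hR, hball⟩ := nhds_basis_closedBall.eventually_iff.1 hnear
    refine ⟨R, hR, fun ξ₁ hξ₁ ξ₂ hξ₂ => @hball (ξ₁, ξ₂) ?_⟩
    rw [← closedBall_prod_same]
    exact ⟨hξ₁, hξ₂⟩
  · rintro ⟨T, hT, hd2l⟩
    refine ⟨T, hT, fun t ht v hv => ?_⟩
    obtain ⟨R, hR, hball⟩ := hd2l t ht
    have hx := mem_closedBall_self (x := φ (t - T) 0 x₀) hR.le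
    have := hball _ hx _ hx v hv
    rw [grammian]
    positivity

/-- positive definiteness of the Observability Grammian at `x(t−T)`
for all `t ≥ T` is equivalent to positive definiteness of the Hessian of the MHE
cost in a neighbourhood of `x(t−T)`. -/
theorem stmt6 {nx nu ny : ℕ}
    (f : Vec nx → Vec nu → Vec nx) (h : Vec nx → Vec nu → Vec ny)
    (u : ℝ → Vec nu) (φ : ℝ → ℝ → Vec nx → Vec nx) (x₀ : Vec nx)
    (hf : ContDiff ℝ 2 (Function.uncurry f))
    (hh : ContDiff ℝ 2 (Function.uncurry h))
    (hflow_init : ∀ s₁ : ℝ, 0 ≤ s₁ → ∀ ξ, φ s₁ s₁ ξ = ξ)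
    (hflow_ode : ∀ s₁ s : ℝ, 0 ≤ s₁ → s₁ ≤ s → ∀ ξ,
      HasDerivAt (fun τ => φ τ s₁ ξ) (f (φ s s₁ ξ) (u s)) s)
    (hC2 : ∀ T > (0 : ℝ), ∀ t ≥ T,
      ContDiff ℝ 2 (fun p : Vec nx × Vec nx => cumError h φ u (t - T) t p.1 p.2)) :
    (∃ T > (0 : ℝ), ∀ t ≥ T,
        ∀ v : Vec nx, v ≠ 0 → 0 < grammian h φ u x₀ t T v v) ↔
      (∃ T > (0 : ℝ), ∀ t ≥ T, ∃ R > (0 : ℝ),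
        ∀ ξ₁ ∈ Metric.closedBall (φ (t - T) 0 x₀) R,
          ∀ ξ₂ ∈ Metric.closedBall (φ (t - T) 0 x₀) R,
            ∀ v : Vec nx, v ≠ 0 → 0 < d2l h φ u (t - T) t ξ₁ ξ₂ v v) :=
  stmt6_general h u φ x₀ hC2
end

section
/- (Uniform Implicit Function Theorem on Banach spaces, existence and uniqueness.) Under assumptions (i)–(vii), for every t ∈ J there exists a unique map φ_t : B(x_{0,t},δ) → B̄(y_{0,t},ε) such that F(t,x,φ_t(x)) = 0 for all x ∈ B(x_{0,t},δ); moreover φ_t(x_{0,t}) = y_{0,t} and φ_t is continuous. -/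
/-!
For fixed `t`, the zeros of `F t x` in `B̄(y₀ t, ε)` are the fixed points of the simplified
Newton map `T_x y = y - Γ t (F t x y)`. By the mean value inequality and (v), this map is
`α`-Lipschitz on the closed ball, and (vi), (vii) make it map the ball into itself, uniformly in
`x ∈ B(x₀ t, δ)`.
Banach's fixed point theorem then gives a unique zero `φ_t x`, and the a posteriori estimate
`dist y (φ_t x) ≤ dist y (T_x y) / (1 - α)` applied to `y = φ_t x'` gives continuity in `x`.
-/

open Function Metric Set Filter Topology
open scoped NNReal

section ParametricFixedPoint

variable {P Y : Type*} [TopologicalSpace P] [MetricSpace Y] {K : ℝ≥0} {s : Set Y}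

theorem LipschitzOnWith.dist_le_of_isFixedPt {f : Y → Y} (hf : LipschitzOnWith K f s)
    (hK : K < 1) {y z : Y} (hy : y ∈ s) (hz : z ∈ s) (hfz : IsFixedPt f z) :
    dist y z ≤ dist y (f y) / (1 - K) := by
  have hcontr : dist (f y) z ≤ K * dist y z := by
    simpa only [hfz.eq] using hf.dist_le_mul y hy z hz
  rw [le_div_iff₀ (sub_pos.2 (NNReal.coe_lt_one.2 hK))]
  linarith [dist_triangle y (f y) z]

theorem LipschitzOnWith.mapsTo_closedBall {f : Y → Y} {c : Y} {r : ℝ}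
    (hf : LipschitzOnWith K f (closedBall c r)) (hc : dist (f c) c ≤ (1 - K) * r) :
    MapsTo f (closedBall c r) (closedBall c r) := by
  intro y hy
  have hr : 0 ≤ r := dist_nonneg.trans hy
  have hfy : dist (f y) (f c) ≤ K * r :=
    (hf.dist_le_mul y hy c (mem_closedBall_self hr)).trans
      (mul_le_mul_of_nonneg_left hy K.2)
  rw [mem_closedBall]
  linarith [dist_triangle (f y) (f c) c]

theorem continuousOn_of_forall_isFixedPt {U : Set P} {T : P → Y → Y} {φ : P → Y} (hK : K < 1)
    (hlip : ∀ p ∈ U, LipschitzOnWith K (T p) s) (hcont : ∀ y ∈ s, ContinuousOn (T · y) U)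
    (hφs : ∀ p ∈ U, φ p ∈ s) (hφ : ∀ p ∈ U, IsFixedPt (T p) (φ p)) : ContinuousOn φ U := by
  intro p₀ hp₀
  have hT : Tendsto (fun p => dist (T p (φ p₀)) (T p₀ (φ p₀))) (𝓝[U] p₀) (𝓝 0) :=
    tendsto_iff_dist_tendsto_zero.1 (hcont _ (hφs p₀ hp₀) p₀ hp₀)
  have hbound : ∀ p ∈ U, dist (φ p) (φ p₀) ≤ dist (T p (φ p₀)) (T p₀ (φ p₀)) / (1 - K) := by
    intro p hp
    calc dist (φ p) (φ p₀) = dist (φ p₀) (φ p) := dist_comm _ _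
      _ ≤ dist (φ p₀) (T p (φ p₀)) / (1 - K) :=
        (hlip p hp).dist_le_of_isFixedPt hK (hφs p₀ hp₀) (hφs p hp) (hφ p hp)
      _ = dist (T p (φ p₀)) (T p₀ (φ p₀)) / (1 - K) := by rw [dist_comm, (hφ p₀ hp₀).eq]
  refine tendsto_iff_dist_tendsto_zero.2 (squeeze_zero' (Eventually.of_forall fun _ => dist_nonneg)
    (eventually_nhdsWithin_of_forall hbound) ?_)
  simpa using hT.div_const (1 - (K : ℝ))

theorem exists_continuousOn_isFixedPt_of_lipschitzOnWith {U : Set P} {T : P → Y → Y}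
    (hs : IsComplete s) (hne : s.Nonempty) (hK : K < 1) (hmaps : ∀ p ∈ U, MapsTo (T p) s s)
    (hlip : ∀ p ∈ U, LipschitzOnWith K (T p) s) (hcont : ∀ y ∈ s, ContinuousOn (T · y) U) :
    ∃ φ : P → Y, (∀ p ∈ U, φ p ∈ s ∧ IsFixedPt (T p) (φ p)) ∧
      (∀ p ∈ U, ∀ y ∈ s, IsFixedPt (T p) y → y = φ p) ∧ ContinuousOn φ U := by
  obtain ⟨y₀, hy₀⟩ := hne
  have : Nonempty Y := ⟨y₀⟩
  have hex : ∀ p ∈ U, ∃ y ∈ s, IsFixedPt (T p) y := fun p hp =>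
    let ⟨y, hy, hfy, _⟩ := ContractingWith.exists_fixedPoint' hs (hmaps p hp)
      ⟨hK, (hlip p hp).mapsToRestrict (hmaps p hp)⟩ hy₀ (edist_ne_top _ _)
    ⟨y, hy, hfy⟩
  choose! φ hφs hφ using hex
  refine ⟨φ, fun p hp => ⟨hφs p hp, hφ p hp⟩, fun p hp y hy hfy => ?_,
    continuousOn_of_forall_isFixedPt hK hlip hcont hφs hφ⟩
  refine dist_le_zero.1 ?_
  simpa [hfy.eq] using (hlip p hp).dist_le_of_isFixedPt hK hy (hφs p hp) (hφ p hp)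

end ParametricFixedPoint

section NewtonMap

variable {Y Z : Type*} [NormedAddCommGroup Y] [NormedSpace ℝ Y] [NormedAddCommGroup Z]
  [NormedSpace ℝ Z] {Γ : Z →L[ℝ] Y} {g : Y → Z}

def newtonMap (Γ : Z →L[ℝ] Y) (g : Y → Z) (y : Y) : Y := y - Γ (g y)

theorem isFixedPt_newtonMap_iff (hΓ : Injective Γ) {y : Y} :
    IsFixedPt (newtonMap Γ g) y ↔ g y = 0 := by
  rw [IsFixedPt, newtonMap, sub_eq_self, map_eq_zero_iff Γ hΓ]

theorem dist_newtonMap_self (y : Y) : dist (newtonMap Γ g y) y = ‖Γ (g y)‖ := by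
  rw [dist_eq_norm, newtonMap, sub_sub_cancel_left, norm_neg]

theorem Convex.lipschitzOnWith_newtonMap {s : Set Y} (hs : Convex ℝ s) {D : Y →L[ℝ] Z}
    (hΓD : Γ.comp D = .id ℝ Y) (hg : ∀ y ∈ s, DifferentiableAt ℝ g y) {C L : ℝ} {K : ℝ≥0}
    (hC : ∀ y ∈ s, ‖fderiv ℝ g y - D‖ ≤ C) (hΓ : ‖Γ‖ ≤ L) (hLC : L * C ≤ K) :
    LipschitzOnWith K (newtonMap Γ g) s := by
  refine LipschitzOnWith.of_dist_le_mul fun y₁ hy₁ y₂ hy₂ => ?_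
  have hΓD' : ∀ v, Γ (D v) = v := fun v => DFunLike.congr_fun hΓD v
  have hsplit : newtonMap Γ g y₁ - newtonMap Γ g y₂ = -Γ (g y₁ - g y₂ - D (y₁ - y₂)) := by
    simp only [newtonMap, map_sub, hΓD']
    abel
  have hmvt : ‖g y₁ - g y₂ - D (y₁ - y₂)‖ ≤ C * ‖y₁ - y₂‖ :=
    hs.norm_image_sub_le_of_norm_hasFDerivWithin_le'
      (fun y hy => (hg y hy).hasFDerivAt.hasFDerivWithinAt) hC hy₂ hy₁
  calc dist (newtonMap Γ g y₁) (newtonMap Γ g y₂)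
      = ‖Γ (g y₁ - g y₂ - D (y₁ - y₂))‖ := by rw [dist_eq_norm, hsplit, norm_neg]
    _ ≤ L * (C * ‖y₁ - y₂‖) := Γ.le_of_opNorm_le_of_le hΓ hmvt
    _ ≤ K * dist y₁ y₂ := by
      rw [← mul_assoc, dist_eq_norm]
      exact mul_le_mul_of_nonneg_right hLC (norm_nonneg _)

theorem exists_continuousOn_zero_of_newtonMap [CompleteSpace Y] {P : Type*} [TopologicalSpace P]
    {G : P → Y → Z} {U : Set P} {c : Y} {r : ℝ} (hr : 0 ≤ r) {K : ℝ≥0} (hK : K < 1)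
    (hΓ : Injective Γ) (hlip : ∀ p ∈ U, LipschitzOnWith K (newtonMap Γ (G p)) (closedBall c r))
    (hc : ∀ p ∈ U, ‖Γ (G p c)‖ ≤ (1 - K) * r)
    (hcont : ∀ y ∈ closedBall c r, ContinuousOn (G · y) U) :
    ∃ φ : P → Y, (∀ p ∈ U, φ p ∈ closedBall c r ∧ G p (φ p) = 0) ∧
      (∀ p ∈ U, ∀ y ∈ closedBall c r, G p y = 0 → y = φ p) ∧ ContinuousOn φ U := by
  have hmaps : ∀ p ∈ U, MapsTo (newtonMap Γ (G p)) (closedBall c r) (closedBall c r) :=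
    fun p hp => (hlip p hp).mapsTo_closedBall ((dist_newtonMap_self c).trans_le (hc p hp))
  have hcont' : ∀ y ∈ closedBall c r, ContinuousOn (fun p => newtonMap Γ (G p) y) U :=
    fun y hy => continuousOn_const.sub (Γ.continuous.comp_continuousOn (hcont y hy))
  simpa only [isFixedPt_newtonMap_iff hΓ] using exists_continuousOn_isFixedPt_of_lipschitzOnWith
    isClosed_closedBall.isComplete (nonempty_closedBall.2 hr) hK hmaps hlip hcont'

end NewtonMap

section ContDiffOnProd

variable {X Y Z : Type*} [NormedAddCommGroup X] [NormedSpace ℝ X] [NormedAddCommGroup Y]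
  [NormedSpace ℝ Y] [NormedAddCommGroup Z] [NormedSpace ℝ Z] {f : X → Y → Z} {Ω : Set (X × Y)}

theorem differentiableAt_of_contDiffOn_uncurry (hf : ContDiffOn ℝ 1 (fun p : X × Y => f p.1 p.2) Ω)
    (hΩ : IsOpen Ω) {x : X} {y : Y} (h : (x, y) ∈ Ω) : DifferentiableAt ℝ (f x) y :=
  ((hf.differentiableOn one_ne_zero).differentiableAt (hΩ.mem_nhds h)).comp y
    ((differentiableAt_const x).prodMk differentiableAt_id)

theorem continuousOn_of_contDiffOn_uncurry (hf : ContDiffOn ℝ 1 (fun p : X × Y => f p.1 p.2) Ω)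
    {U : Set X} {y : Y} (h : ∀ x ∈ U, (x, y) ∈ Ω) : ContinuousOn (f · y) U :=
  hf.continuousOn.comp (continuousOn_id.prodMk continuousOn_const) h

end ContDiffOnProd

theorem apply_le_apply_of_monotoneOn_Icc₂ {g : ℝ → ℝ → ℝ} {a b r s : ℝ}
    (h₁ : ∀ s ∈ Icc 0 b, MonotoneOn (fun r => g r s) (Icc 0 a))
    (h₂ : ∀ r ∈ Icc 0 a, MonotoneOn (fun s => g r s) (Icc 0 b))
    (hr : r ∈ Icc 0 a) (hs : s ∈ Icc 0 b) : g r s ≤ g a b := by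
  have ha : a ∈ Icc 0 a := right_mem_Icc.2 (hr.1.trans hr.2)
  have hb : b ∈ Icc 0 b := right_mem_Icc.2 (hs.1.trans hs.2)
  exact (h₁ s hs hr ha hr.2).trans (h₂ a ha hs hb hs.2)

variable {J : Type*} {X Y Z : Type*}
  [NormedAddCommGroup X] [NormedSpace ℝ X] [CompleteSpace X]
  [NormedAddCommGroup Y] [NormedSpace ℝ Y] [CompleteSpace Y]
  [NormedAddCommGroup Z] [NormedSpace ℝ Z] [CompleteSpace Z]

theorem stmt13_general
    (Ω : Set (X × Y)) (hΩ : IsOpen Ω)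
    (F : J → X → Y → Z) (x₀ : J → X) (y₀ : J → Y)
    (ε δ L α : ℝ) (hε : 0 < ε) (hδ : 0 < δ) (hα0 : 0 < α) (hα1 : α < 1)
    -- (i)
    (hS : ∀ t : J, (Metric.ball (x₀ t) δ) ×ˢ (Metric.closedBall (y₀ t) ε) ⊆ Ω)
    -- (ii)
    (hF0 : ∀ t : J, F t (x₀ t) (y₀ t) = 0)
    -- (iii)
    (hC1 : ∀ t : J, ContDiffOn ℝ 1 (fun p : X × Y => F t p.1 p.2) Ω)
    -- (iv): d_yF(t,x₀ₜ,y₀ₜ) is invertible with inverse Γ t of norm at most L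
    (Γ : J → (Z →L[ℝ] Y))
    (hΓ_left : ∀ t : J,
      (Γ t).comp (fderiv ℝ (fun y => F t (x₀ t) y) (y₀ t)) = ContinuousLinearMap.id ℝ Y)
    (hΓ_right : ∀ t : J,
      (fderiv ℝ (fun y => F t (x₀ t) y) (y₀ t)).comp (Γ t) = ContinuousLinearMap.id ℝ Z)
    (hΓ_norm : ∀ t : J, ‖Γ t‖ ≤ L)
    -- (v)
    (g₁ : ℝ → ℝ → ℝ)
    (hg₁_mono₁ : ∀ s ∈ Icc (0 : ℝ) ε, MonotoneOn (fun r => g₁ r s) (Icc (0 : ℝ) δ))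
    (hg₁_mono₂ : ∀ r ∈ Icc (0 : ℝ) δ, MonotoneOn (fun s => g₁ r s) (Icc (0 : ℝ) ε))
    (hg₁ : ∀ t : J, ∀ x ∈ Metric.ball (x₀ t) δ, ∀ y ∈ Metric.closedBall (y₀ t) ε,
      ‖fderiv ℝ (fun y' => F t x y') y - fderiv ℝ (fun y' => F t (x₀ t) y') (y₀ t)‖ ≤
        g₁ ‖x - x₀ t‖ ‖y - y₀ t‖)
    -- (vi)
    (g₂ : ℝ → ℝ) (hg₂_mono : MonotoneOn g₂ (Icc (0 : ℝ) δ))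
    (hg₂ : ∀ t : J, ∀ x ∈ Metric.ball (x₀ t) δ, ‖F t x (y₀ t)‖ ≤ g₂ ‖x - x₀ t‖)
    -- (vii)
    (hcond₁ : L * g₁ δ ε ≤ α) (hcond₂ : L * g₂ δ ≤ ε * (1 - α)) :
    ∀ t : J, ∃ ψ : X → Y,
      (∀ x ∈ Metric.ball (x₀ t) δ,
        ψ x ∈ Metric.closedBall (y₀ t) ε ∧ F t x (ψ x) = 0) ∧
      ψ (x₀ t) = y₀ t ∧
      ContinuousOn ψ (Metric.ball (x₀ t) δ) ∧
      (∀ ψ' : X → Y,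
        (∀ x ∈ Metric.ball (x₀ t) δ,
          ψ' x ∈ Metric.closedBall (y₀ t) ε ∧ F t x (ψ' x) = 0) →
        ∀ x ∈ Metric.ball (x₀ t) δ, ψ' x = ψ x) := by
  intro t
  set K : ℝ≥0 := α.toNNReal
  have hKα : (K : ℝ) = α := Real.coe_toNNReal α hα0.le
  have hΓ_inj : Injective (Γ t) := LeftInverse.injective fun z => DFunLike.congr_fun (hΓ_right t) z
  have hlip : ∀ x ∈ ball (x₀ t) δ,
      LipschitzOnWith K (newtonMap (Γ t) (F t x)) (closedBall (y₀ t) ε) := fun x hx =>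
    (convex_closedBall _ _).lipschitzOnWith_newtonMap (hΓ_left t)
      (fun y hy => differentiableAt_of_contDiffOn_uncurry (hC1 t) hΩ (hS t ⟨hx, hy⟩))
      (fun y hy => (hg₁ t x hx y hy).trans (apply_le_apply_of_monotoneOn_Icc₂ hg₁_mono₁ hg₁_mono₂
        ⟨norm_nonneg _, (mem_ball_iff_norm.1 hx).le⟩ ⟨norm_nonneg _, mem_closedBall_iff_norm.1 hy⟩))
      (hΓ_norm t) (hKα ▸ hcond₁)
  have hc : ∀ x ∈ ball (x₀ t) δ, ‖Γ t (F t x (y₀ t))‖ ≤ (1 - K) * ε := by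
    intro x hx
    have hx' : ‖x - x₀ t‖ ≤ δ := (mem_ball_iff_norm.1 hx).le
    calc ‖Γ t (F t x (y₀ t))‖ ≤ L * g₂ δ := (Γ t).le_of_opNorm_le_of_le (hΓ_norm t)
          ((hg₂ t x hx).trans (hg₂_mono ⟨norm_nonneg _, hx'⟩ ⟨hδ.le, le_rfl⟩ hx'))
      _ ≤ (1 - K) * ε := by rw [hKα]; linarith
  obtain ⟨ψ, hψ, hψ_uniq, hψ_cont⟩ := exists_continuousOn_zero_of_newtonMap hε.le
    (Real.toNNReal_lt_one.2 hα1) hΓ_inj hlip hc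
    fun y hy => continuousOn_of_contDiffOn_uncurry (hC1 t) fun x hx => hS t ⟨hx, hy⟩
  exact ⟨ψ, hψ, (hψ_uniq _ (mem_ball_self hδ) _ (mem_closedBall_self hε.le) (hF0 t)).symm,
    hψ_cont, fun ψ' hψ' x hx => hψ_uniq x hx _ (hψ' x hx).1 (hψ' x hx).2⟩

/-- Uniform Implicit Function Theorem on Banach spaces with explicit
neighbourhoods — existence and uniqueness of the family of implicit maps. -/
theorem stmt13
    (Ω : Set (X × Y)) (hΩ : IsOpen Ω)
    (F : J → X → Y → Z) (x₀ : J → X) (y₀ : J → Y)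
    (ε δ L α : ℝ) (hε : 0 < ε) (hδ : 0 < δ) (hL : 0 < L) (hα0 : 0 < α) (hα1 : α < 1)
    -- (i)
    (hS : ∀ t : J, (Metric.ball (x₀ t) δ) ×ˢ (Metric.closedBall (y₀ t) ε) ⊆ Ω)
    -- (ii)
    (hF0 : ∀ t : J, F t (x₀ t) (y₀ t) = 0)
    -- (iii)
    (hC1 : ∀ t : J, ContDiffOn ℝ 1 (fun p : X × Y => F t p.1 p.2) Ω)
    -- (iv): d_yF(t,x₀ₜ,y₀ₜ) is invertible with inverse Γ t of norm at most L
    (Γ : J → (Z →L[ℝ] Y))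
    (hΓ_left : ∀ t : J,
      (Γ t).comp (fderiv ℝ (fun y => F t (x₀ t) y) (y₀ t)) = ContinuousLinearMap.id ℝ Y)
    (hΓ_right : ∀ t : J,
      (fderiv ℝ (fun y => F t (x₀ t) y) (y₀ t)).comp (Γ t) = ContinuousLinearMap.id ℝ Z)
    (hΓ_norm : ∀ t : J, ‖Γ t‖ ≤ L)
    -- (v)
    (g₁ : ℝ → ℝ → ℝ)
    (hg₁_mono₁ : ∀ s ∈ Icc (0 : ℝ) ε, MonotoneOn (fun r => g₁ r s) (Icc (0 : ℝ) δ))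
    (hg₁_mono₂ : ∀ r ∈ Icc (0 : ℝ) δ, MonotoneOn (fun s => g₁ r s) (Icc (0 : ℝ) ε))
    (hg₁ : ∀ t : J, ∀ x ∈ Metric.ball (x₀ t) δ, ∀ y ∈ Metric.closedBall (y₀ t) ε,
      ‖fderiv ℝ (fun y' => F t x y') y - fderiv ℝ (fun y' => F t (x₀ t) y') (y₀ t)‖ ≤
        g₁ ‖x - x₀ t‖ ‖y - y₀ t‖)
    -- (vi)
    (g₂ : ℝ → ℝ) (hg₂_mono : MonotoneOn g₂ (Icc (0 : ℝ) δ))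
    (hg₂ : ∀ t : J, ∀ x ∈ Metric.ball (x₀ t) δ, ‖F t x (y₀ t)‖ ≤ g₂ ‖x - x₀ t‖)
    -- (vii)
    (hcond₁ : L * g₁ δ ε ≤ α) (hcond₂ : L * g₂ δ ≤ ε * (1 - α)) :
    ∀ t : J, ∃ ψ : X → Y,
      (∀ x ∈ Metric.ball (x₀ t) δ,
        ψ x ∈ Metric.closedBall (y₀ t) ε ∧ F t x (ψ x) = 0) ∧
      ψ (x₀ t) = y₀ t ∧
      ContinuousOn ψ (Metric.ball (x₀ t) δ) ∧
      (∀ ψ' : X → Y,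
        (∀ x ∈ Metric.ball (x₀ t) δ,
          ψ' x ∈ Metric.closedBall (y₀ t) ε ∧ F t x (ψ' x) = 0) →
        ∀ x ∈ Metric.ball (x₀ t) δ, ψ' x = ψ x) :=
  stmt13_general Ω hΩ F x₀ y₀ ε δ L α hε hδ hα0 hα1 hS hF0 hC1 Γ hΓ_left hΓ_right hΓ_norm g₁
    hg₁_mono₁ hg₁_mono₂ hg₁ g₂ hg₂_mono hg₂ hcond₁ hcond₂
end

section
/- (Uniform Implicit Function Theorem on Banach spaces, differentiability.) Under assumptions (i)–(vii), let φ_t : B(x_{0,t},δ) → B̄(y_{0,t},ε) be the unique map with F(t,x,φ_t(x)) = 0 for all x ∈ B(x_{0,t},δ). Then for every t ∈ J and every x ∈ B(x_{0,t},δ): the operator d_yF(t,x,φ_t(x)) : Y → Z is invertible with ‖(d_yF(t,x,φ_t(x)))^{-1}‖ ≤ L/(1 − L g₁(δ,ε)); and φ_t is continuously Fréchet differentiable on B(x_{0,t},δ) with dφ_t(x) = −(d_yF(t,x,φ_t(x)))^{-1} ∘ d_xF(t,x,φ_t(x)). -/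
/-!
Fix `t`. On `B(x₀,δ) × B̄(y₀,ε)` the partial derivative `d_yF` stays within `g₁(δ,ε)` of
`d_yF(x₀,y₀)`, whose inverse `Γ` has norm at most `L`, and `L g₁(δ,ε) ≤ α < 1`. Hence every such
`d_yF` is invertible (a Neumann series for `Γ ∘ d_yF`), and `‖v‖ ≤ L (‖d_yF v‖ + g₁(δ,ε) ‖v‖)`
bounds its inverse by `L / (1 - L g₁(δ,ε))`. The same estimate, fed through the mean value
inequality, gives `(1 - L g₁(δ,ε)) ‖y₁ - y₂‖ ≤ L ‖F(x,y₁) - F(x,y₂)‖` on the closed ball; with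
`y₁ = ψ x'` and `y₂ = ψ x` this forces `ψ` to be continuous. A continuous solution of
`F(x, ψ x) = 0` agrees near each point with the implicit function of the classical theorem, so it
inherits its `C¹` regularity and its derivative `-(d_yF)⁻¹ ∘ d_xF`.
-/

open Metric Set

variable {J : Type*} {X Y Z : Type*}
  [NormedAddCommGroup X] [NormedSpace ℝ X] [CompleteSpace X]
  [NormedAddCommGroup Y] [NormedSpace ℝ Y] [CompleteSpace Y]
  [NormedAddCommGroup Z] [NormedSpace ℝ Z] [CompleteSpace Z]

open Filter Topology ContinuousLinearMap

theorem apply_le_apply_of_monotoneOn₂ {α β γ : Type*} [Preorder α] [Preorder β] [Preorder γ]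
    {g : α → β → γ} {r₀ r a : α} {s₀ s b : β}
    (h₁ : ∀ s ∈ Icc s₀ b, MonotoneOn (g · s) (Icc r₀ a))
    (h₂ : ∀ r ∈ Icc r₀ a, MonotoneOn (g r) (Icc s₀ b)) (hr : r ∈ Icc r₀ a) (hs : s ∈ Icc s₀ b) :
    g r s ≤ g a b := by
  have ha : a ∈ Icc r₀ a := ⟨hr.1.trans hr.2, le_rfl⟩
  have hb : b ∈ Icc s₀ b := ⟨hs.1.trans hs.2, le_rfl⟩
  exact (h₁ s hs hr ha hr.2).trans (h₂ a ha hs hb hs.2)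

namespace ContinuousLinearMap

variable {𝕜 : Type*} [NontriviallyNormedField 𝕜]
  {E F : Type*} [NormedAddCommGroup E] [NormedSpace 𝕜 E] [NormedAddCommGroup F]
  [NormedSpace 𝕜 F]
  {A : E →L[𝕜] F} {Γ : F →L[𝕜] E} {L c : ℝ}

theorem mul_norm_le_of_norm_sub_apply_le (hΓA : Γ ∘L A = .id 𝕜 E) (hΓ : ‖Γ‖ ≤ L)
    {v : E} {w : F} (h : ‖w - A v‖ ≤ c * ‖v‖) : (1 - L * c) * ‖v‖ ≤ L * ‖w‖ := by
  have hL : 0 ≤ L := (norm_nonneg Γ).trans hΓ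
  have hv : ‖v‖ ≤ L * ‖A v‖ := by
    calc ‖v‖ = ‖Γ (A v)‖ := by rw [← comp_apply, hΓA, id_apply]
      _ ≤ L * ‖A v‖ := Γ.le_of_opNorm_le hΓ _
  have hAv : ‖A v‖ ≤ ‖w‖ + c * ‖v‖ := by
    calc ‖A v‖ = ‖w - (w - A v)‖ := by rw [sub_sub_cancel]
      _ ≤ ‖w‖ + ‖w - A v‖ := norm_sub_le _ _
      _ ≤ ‖w‖ + c * ‖v‖ := by gcongr
  nlinarith [mul_le_mul_of_nonneg_left hAv hL]

theorem isInvertible_of_norm_sub_le [CompleteSpace E] (hΓA : Γ ∘L A = .id 𝕜 E)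
    (hAΓ : A ∘L Γ = .id 𝕜 F) (hΓ : ‖Γ‖ ≤ L) {B : E →L[𝕜] F} (hB : ‖B - A‖ ≤ c)
    (hLc : L * c < 1) : B.IsInvertible := by
  have hsmall : ‖Γ ∘L (A - B)‖ < 1 :=
    calc ‖Γ ∘L (A - B)‖ ≤ ‖Γ‖ * ‖A - B‖ := opNorm_comp_le _ _
      _ ≤ L * c := by rw [norm_sub_rev]; gcongr; exact (norm_nonneg Γ).trans hΓ
      _ < 1 := hLc
  obtain ⟨U, hU⟩ : IsUnit (Γ ∘L B) := by
    simpa [comp_sub, hΓA, one_def] using isUnit_one_sub_of_norm_lt_one hsmall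
  have hB : B = A ∘L (Γ ∘L B) := by rw [← comp_assoc, hAΓ, id_comp]
  rw [hB, ← hU]
  exact (IsInvertible.of_inverse hAΓ hΓA).comp ⟨ContinuousLinearEquiv.unitsEquiv 𝕜 E U, rfl⟩

theorem norm_inverse_le_of_norm_sub_le (hΓA : Γ ∘L A = .id 𝕜 E) (hΓ : ‖Γ‖ ≤ L)
    {B : E →L[𝕜] F} (hBinv : B.IsInvertible) (hB : ‖B - A‖ ≤ c) (hLc : L * c < 1) :
    ‖B.inverse‖ ≤ L / (1 - L * c) := by
  have hpos : 0 < 1 - L * c := by linarith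
  refine opNorm_le_bound _ (div_nonneg ((norm_nonneg Γ).trans hΓ) hpos.le) fun z => ?_
  have h := mul_norm_le_of_norm_sub_apply_le hΓA hΓ (v := B.inverse z) (w := z) <| by
    calc ‖z - A (B.inverse z)‖ = ‖(B - A) (B.inverse z)‖ := by
          rw [sub_apply, hBinv.self_apply_inverse]
      _ ≤ c * ‖B.inverse z‖ := (B - A).le_of_opNorm_le hB _
  rw [div_mul_eq_mul_div, le_div_iff₀ hpos]
  linarith

end ContinuousLinearMap

section

variable {E F : Type*} [NormedAddCommGroup E] [NormedSpace ℝ E] [NormedAddCommGroup F]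
  [NormedSpace ℝ F] {A : E →L[ℝ] F} {Γ : F →L[ℝ] E} {L c : ℝ}

theorem Convex.mul_norm_sub_le_of_norm_hasFDerivWithin_sub_le {s : Set E} (hs : Convex ℝ s)
    {G : E → F} {G' : E → E →L[ℝ] F} (hG : ∀ y ∈ s, HasFDerivWithinAt G (G' y) s y)
    (hG' : ∀ y ∈ s, ‖G' y - A‖ ≤ c) (hΓA : Γ ∘L A = .id ℝ E) (hΓ : ‖Γ‖ ≤ L)
    {y₁ y₂ : E} (hy₁ : y₁ ∈ s) (hy₂ : y₂ ∈ s) :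
    (1 - L * c) * ‖y₁ - y₂‖ ≤ L * ‖G y₁ - G y₂‖ :=
  mul_norm_le_of_norm_sub_apply_le hΓA hΓ
    (hs.norm_image_sub_le_of_norm_hasFDerivWithin_le' hG hG' hy₂ hy₁)

variable {T : Type*} [TopologicalSpace T]

theorem continuousAt_of_apply_eq_zero_of_norm_hasFDerivWithin_sub_le {f : T → E → F}
    {f₂ : T → E → E →L[ℝ] F} {U : Set T} {K : Set E} (hK : Convex ℝ K)
    (hf₂ : ∀ x ∈ U, ∀ y ∈ K, HasFDerivWithinAt (f x) (f₂ x y) K y)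
    (hf₂A : ∀ x ∈ U, ∀ y ∈ K, ‖f₂ x y - A‖ ≤ c) (hΓA : Γ ∘L A = .id ℝ E) (hΓ : ‖Γ‖ ≤ L)
    (hLc : L * c < 1) {ψ : T → E} (hψK : ∀ x ∈ U, ψ x ∈ K) (hψ : ∀ x ∈ U, f x (ψ x) = 0)
    {x : T} (hU : U ∈ 𝓝 x) (hfx : ContinuousAt (f · (ψ x)) x) : ContinuousAt ψ x := by
  have hx := mem_of_mem_nhds hU
  have hpos : 0 < 1 - L * c := by linarith
  have hbound : ∀ x' ∈ U, ‖ψ x' - ψ x‖ ≤ L / (1 - L * c) * ‖f x' (ψ x)‖ := by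
    intro x' hx'
    have h := hK.mul_norm_sub_le_of_norm_hasFDerivWithin_sub_le (hf₂ x' hx') (hf₂A x' hx')
      hΓA hΓ (hψK x' hx') (hψK x hx)
    rw [hψ x' hx', zero_sub, norm_neg] at h
    rw [div_mul_eq_mul_div, le_div_iff₀ hpos]
    linarith
  have hlim : Tendsto (fun x' => L / (1 - L * c) * ‖f x' (ψ x)‖) (𝓝 x) (𝓝 0) := by
    simpa [hψ x hx] using (hfx.norm.const_mul (L / (1 - L * c))).tendsto
  rw [ContinuousAt, tendsto_iff_norm_sub_tendsto_zero]
  exact squeeze_zero' (.of_forall fun _ => norm_nonneg _) (eventually_of_mem hU hbound) hlim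

end

section

variable {𝕜 : Type*} [RCLike 𝕜]
  {E₁ E₂ F : Type*} [NormedAddCommGroup E₁] [NormedSpace 𝕜 E₁] [CompleteSpace E₁]
  [NormedAddCommGroup E₂] [NormedSpace 𝕜 E₂] [CompleteSpace E₂]
  [NormedAddCommGroup F] [NormedSpace 𝕜 F] [CompleteSpace F] {n : WithTop ℕ∞}

theorem ContDiffAt.eventuallyEq_implicitFunction
    {f : E₁ × E₂ → F} {u : E₁ × E₂} (cdf : ContDiffAt 𝕜 n f u) (pn : n ≠ 0)
    (if₂ : (fderiv 𝕜 f u ∘L .inr 𝕜 E₁ E₂).IsInvertible) {ψ : E₁ → E₂}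
    (hψ : ContinuousAt ψ u.1) (hψu : ψ u.1 = u.2) (hfψ : ∀ᶠ x in 𝓝 u.1, f (x, ψ x) = f u) :
    ψ =ᶠ[𝓝 u.1] cdf.implicitFunction pn if₂ := by
  have hgraph : Tendsto (fun x => (x, ψ x)) (𝓝 u.1) (𝓝 u) := by
    simpa [hψu] using (continuousAt_id.prodMk hψ).tendsto
  filter_upwards [hgraph.eventually (cdf.eventually_apply_eq_iff_implicitFunction pn if₂), hfψ]
    with x hiff hx
  exact (hiff.mp hx).symm

theorem contDiffAt_and_hasStrictFDerivAt_of_eventually_apply_eq_zero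
    {f : E₁ → E₂ → F} {ψ : E₁ → E₂} {x : E₁}
    (hf : ContDiffAt 𝕜 n (fun p : E₁ × E₂ => f p.1 p.2) (x, ψ x)) (hn : n ≠ 0)
    (hinv : (fderiv 𝕜 (f x) (ψ x)).IsInvertible) (hψ : ContinuousAt ψ x)
    (hfψ : ∀ᶠ x' in 𝓝 x, f x' (ψ x') = 0) :
    ContDiffAt 𝕜 n ψ x ∧
      HasStrictFDerivAt ψ (-((fderiv 𝕜 (f x) (ψ x)).inverse ∘L fderiv 𝕜 (f · (ψ x)) x)) x := by
  have hd := (hf.differentiableAt hn).hasFDerivAt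
  have h₂ : fderiv 𝕜 (f x) (ψ x) =
      fderiv 𝕜 (fun p : E₁ × E₂ => f p.1 p.2) (x, ψ x) ∘L .inr 𝕜 E₁ E₂ :=
    (hd.comp (ψ x) (hasFDerivAt_prodMk_right x (ψ x))).fderiv
  have h₁ : fderiv 𝕜 (f · (ψ x)) x =
      fderiv 𝕜 (fun p : E₁ × E₂ => f p.1 p.2) (x, ψ x) ∘L .inl 𝕜 E₁ E₂ :=
    (hd.comp (f := fun x' => (x', ψ x)) x (hasFDerivAt_prodMk_left x (ψ x))).fderiv
  rw [h₂] at hinv ⊢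
  have heq := hf.eventuallyEq_implicitFunction hn hinv hψ rfl <| by
    simpa only [hfψ.self_of_nhds] using hfψ
  refine ⟨(hf.contDiffAt_implicitFunction hn hinv).congr_of_eventuallyEq heq, ?_⟩
  rw [h₁]
  exact (hf.hasStrictFDerivAt_implicitFunction hn hinv).congr_of_eventuallyEq heq.symm

end

theorem stmt14_general
    (Ω : Set (X × Y)) (hΩ : IsOpen Ω)
    (F : J → X → Y → Z) (x₀ : J → X) (y₀ : J → Y)
    (ε δ L α : ℝ) (hα1 : α < 1)
    (hS : ∀ t : J, (Metric.ball (x₀ t) δ) ×ˢ (Metric.closedBall (y₀ t) ε) ⊆ Ω)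
    (hC1 : ∀ t : J, ContDiffOn ℝ 1 (fun p : X × Y => F t p.1 p.2) Ω)
    (Γ : J → (Z →L[ℝ] Y))
    (hΓ_left : ∀ t : J,
      (Γ t).comp (fderiv ℝ (fun y => F t (x₀ t) y) (y₀ t)) = ContinuousLinearMap.id ℝ Y)
    (hΓ_right : ∀ t : J,
      (fderiv ℝ (fun y => F t (x₀ t) y) (y₀ t)).comp (Γ t) = ContinuousLinearMap.id ℝ Z)
    (hΓ_norm : ∀ t : J, ‖Γ t‖ ≤ L)
    (g₁ : ℝ → ℝ → ℝ)
    (hg₁_mono₁ : ∀ s ∈ Icc (0 : ℝ) ε, MonotoneOn (fun r => g₁ r s) (Icc (0 : ℝ) δ))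
    (hg₁_mono₂ : ∀ r ∈ Icc (0 : ℝ) δ, MonotoneOn (fun s => g₁ r s) (Icc (0 : ℝ) ε))
    (hg₁ : ∀ t : J, ∀ x ∈ Metric.ball (x₀ t) δ, ∀ y ∈ Metric.closedBall (y₀ t) ε,
      ‖fderiv ℝ (fun y' => F t x y') y - fderiv ℝ (fun y' => F t (x₀ t) y') (y₀ t)‖ ≤
        g₁ ‖x - x₀ t‖ ‖y - y₀ t‖)
    (hcond₁ : L * g₁ δ ε ≤ α)
    -- ψ is the family of implicit maps from STATEMENT 13
    (ψ : J → X → Y)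
    (hψ : ∀ t : J, ∀ x ∈ Metric.ball (x₀ t) δ,
      ψ t x ∈ Metric.closedBall (y₀ t) ε ∧ F t x (ψ t x) = 0) :
    ∀ t : J,
      ContDiffOn ℝ 1 (ψ t) (Metric.ball (x₀ t) δ) ∧
      ∀ x ∈ Metric.ball (x₀ t) δ, ∃ Γ' : Z →L[ℝ] Y,
        Γ'.comp (fderiv ℝ (fun y => F t x y) (ψ t x)) = ContinuousLinearMap.id ℝ Y ∧
        (fderiv ℝ (fun y => F t x y) (ψ t x)).comp Γ' = ContinuousLinearMap.id ℝ Z ∧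
        ‖Γ'‖ ≤ L / (1 - L * g₁ δ ε) ∧
        HasFDerivAt (ψ t) (-(Γ'.comp (fderiv ℝ (fun x' => F t x' (ψ t x)) x))) x := by
  intro t
  have hf : ∀ x ∈ ball (x₀ t) δ, ∀ y ∈ closedBall (y₀ t) ε,
      ContDiffAt ℝ 1 (fun p : X × Y => F t p.1 p.2) (x, y) := fun x hx y hy =>
    (hC1 t).contDiffAt (hΩ.mem_nhds (hS t ⟨hx, hy⟩))
  have hdiff : ∀ x ∈ ball (x₀ t) δ, ∀ y ∈ closedBall (y₀ t) ε, DifferentiableAt ℝ (F t x) y :=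
    fun x hx y hy => ((hf x hx y hy).differentiableAt one_ne_zero).comp y
      ((differentiableAt_const x).prodMk differentiableAt_id)
  have hclose : ∀ x ∈ ball (x₀ t) δ, ∀ y ∈ closedBall (y₀ t) ε,
      ‖fderiv ℝ (F t x) y - fderiv ℝ (F t (x₀ t)) (y₀ t)‖ ≤ g₁ δ ε := fun x hx y hy =>
    (hg₁ t x hx y hy).trans <| apply_le_apply_of_monotoneOn₂ hg₁_mono₁ hg₁_mono₂
      ⟨norm_nonneg _, (mem_ball_iff_norm.mp hx).le⟩ ⟨norm_nonneg _, mem_closedBall_iff_norm.mp hy⟩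
  have hLc : L * g₁ δ ε < 1 := hcond₁.trans_lt hα1
  have hψc : ∀ x ∈ ball (x₀ t) δ, ContinuousAt (ψ t) x := fun x hx =>
    continuousAt_of_apply_eq_zero_of_norm_hasFDerivWithin_sub_le (convex_closedBall _ _)
      (fun x' hx' y hy => (hdiff x' hx' y hy).hasFDerivAt.hasFDerivWithinAt) hclose (hΓ_left t)
      (hΓ_norm t) hLc (fun x' hx' => (hψ t x' hx').1) (fun x' hx' => (hψ t x' hx').2)
      (isOpen_ball.mem_nhds hx) <|
        (hf x hx _ (hψ t x hx).1).continuousAt.comp (f := fun x' => (x', ψ t x))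
          (continuousAt_id.prodMk continuousAt_const)
  have hinv : ∀ x ∈ ball (x₀ t) δ, (fderiv ℝ (F t x) (ψ t x)).IsInvertible := fun x hx =>
    isInvertible_of_norm_sub_le (hΓ_left t) (hΓ_right t) (hΓ_norm t)
      (hclose x hx _ (hψ t x hx).1) hLc
  have himplicit : ∀ x ∈ ball (x₀ t) δ, ContDiffAt ℝ 1 (ψ t) x ∧ HasStrictFDerivAt (ψ t)
      (-((fderiv ℝ (F t x) (ψ t x)).inverse ∘L fderiv ℝ (F t · (ψ t x)) x)) x := fun x hx =>
    contDiffAt_and_hasStrictFDerivAt_of_eventually_apply_eq_zero (hf x hx _ (hψ t x hx).1)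
      one_ne_zero (hinv x hx) (hψc x hx)
      (eventually_of_mem (isOpen_ball.mem_nhds hx) fun x' hx' => (hψ t x' hx').2)
  refine ⟨fun x hx => (himplicit x hx).1.contDiffWithinAt, fun x hx =>
    ⟨_, (hinv x hx).inverse_comp_self, (hinv x hx).self_comp_inverse, ?_,
      (himplicit x hx).2.hasFDerivAt⟩⟩
  exact norm_inverse_le_of_norm_sub_le (hΓ_left t) (hΓ_norm t) (hinv x hx)
    (hclose x hx _ (hψ t x hx).1) hLc

/-- Uniform Implicit Function Theorem on Banach spaces —
differentiability of the implicit maps, with the uniform bound on the inverse of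
the partial derivative and the formula for the derivative. -/
theorem stmt14
    (Ω : Set (X × Y)) (hΩ : IsOpen Ω)
    (F : J → X → Y → Z) (x₀ : J → X) (y₀ : J → Y)
    (ε δ L α : ℝ) (hε : 0 < ε) (hδ : 0 < δ) (hL : 0 < L) (hα0 : 0 < α) (hα1 : α < 1)
    (hS : ∀ t : J, (Metric.ball (x₀ t) δ) ×ˢ (Metric.closedBall (y₀ t) ε) ⊆ Ω)
    (hF0 : ∀ t : J, F t (x₀ t) (y₀ t) = 0)
    (hC1 : ∀ t : J, ContDiffOn ℝ 1 (fun p : X × Y => F t p.1 p.2) Ω)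
    (Γ : J → (Z →L[ℝ] Y))
    (hΓ_left : ∀ t : J,
      (Γ t).comp (fderiv ℝ (fun y => F t (x₀ t) y) (y₀ t)) = ContinuousLinearMap.id ℝ Y)
    (hΓ_right : ∀ t : J,
      (fderiv ℝ (fun y => F t (x₀ t) y) (y₀ t)).comp (Γ t) = ContinuousLinearMap.id ℝ Z)
    (hΓ_norm : ∀ t : J, ‖Γ t‖ ≤ L)
    (g₁ : ℝ → ℝ → ℝ)
    (hg₁_mono₁ : ∀ s ∈ Icc (0 : ℝ) ε, MonotoneOn (fun r => g₁ r s) (Icc (0 : ℝ) δ))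
    (hg₁_mono₂ : ∀ r ∈ Icc (0 : ℝ) δ, MonotoneOn (fun s => g₁ r s) (Icc (0 : ℝ) ε))
    (hg₁ : ∀ t : J, ∀ x ∈ Metric.ball (x₀ t) δ, ∀ y ∈ Metric.closedBall (y₀ t) ε,
      ‖fderiv ℝ (fun y' => F t x y') y - fderiv ℝ (fun y' => F t (x₀ t) y') (y₀ t)‖ ≤
        g₁ ‖x - x₀ t‖ ‖y - y₀ t‖)
    (g₂ : ℝ → ℝ) (hg₂_mono : MonotoneOn g₂ (Icc (0 : ℝ) δ))
    (hg₂ : ∀ t : J, ∀ x ∈ Metric.ball (x₀ t) δ, ‖F t x (y₀ t)‖ ≤ g₂ ‖x - x₀ t‖)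
    (hcond₁ : L * g₁ δ ε ≤ α) (hcond₂ : L * g₂ δ ≤ ε * (1 - α))
    -- ψ is the family of implicit maps from STATEMENT 13
    (ψ : J → X → Y)
    (hψ : ∀ t : J, ∀ x ∈ Metric.ball (x₀ t) δ,
      ψ t x ∈ Metric.closedBall (y₀ t) ε ∧ F t x (ψ t x) = 0) :
    ∀ t : J,
      ContDiffOn ℝ 1 (ψ t) (Metric.ball (x₀ t) δ) ∧
      ∀ x ∈ Metric.ball (x₀ t) δ, ∃ Γ' : Z →L[ℝ] Y,
        Γ'.comp (fderiv ℝ (fun y => F t x y) (ψ t x)) = ContinuousLinearMap.id ℝ Y ∧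
        (fderiv ℝ (fun y => F t x y) (ψ t x)).comp Γ' = ContinuousLinearMap.id ℝ Z ∧
        ‖Γ'‖ ≤ L / (1 - L * g₁ δ ε) ∧
        HasFDerivAt (ψ t) (-(Γ'.comp (fderiv ℝ (fun x' => F t x' (ψ t x)) x))) x :=
  stmt14_general Ω hΩ F x₀ y₀ ε δ L α hα1 hS hC1 Γ hΓ_left hΓ_right hΓ_norm g₁ hg₁_mono₁ hg₁_mono₂
    hg₁ hcond₁ ψ hψ
end
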